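/- Let T > 0 be the capacity ratio, let γ ∈ (0,1) be the fraction of lookups in the workload, and let E, B, f₁, I_r, I_w, c_r, c_w be positive reals. Define X = T·E·(I_r+I_w)·(1−γ) + T·B·c_w·(1−γ), Y = B·f₁·I_r·γ, and Z = B·c_r·γ, and for each integer i ≥ 1 define the optimal compaction policy K*_i = √(X / (Y·T^{i−1} + Z)). Then for every integer i ≥ 2, the policy propagation formula holds: 1/K*_{i+1} = √( 1/(K*_i)² + T·( 1/(K*_i)² − 1/(K*_{i−1})² ) ). -/

import Mathlib

/-! The reciprocal squares `1 / K*_k² = (Y·T^{k-1} + Z) / X` are an affine function of the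
geometric sequence `T^{k-1}`, and any `a_k = Y·T^k + Z` satisfies the second-order recurrence
`a_{k+2} - a_{k+1} = T·(a_{k+1} - a_k)`. -/

theorem mul_pow_add_recurrence {R : Type*} [CommRing R] (Y Z T : R) (k : ℕ) :
    Y * T ^ (k + 2) + Z = Y * T ^ (k + 1) + Z + T * ((Y * T ^ (k + 1) + Z) - (Y * T ^ k + Z)) := by
  ring

theorem one_div_sqrt_div_propagation {X T a₀ a₁ a₂ : ℝ} (hX : 0 ≤ X) (ha₀ : 0 ≤ a₀) (ha₁ : 0 ≤ a₁)
    (hrec : a₂ = a₁ + T * (a₁ - a₀)) :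
    1 / √(X / a₂) = √(1 / √(X / a₁) ^ 2 + T * (1 / √(X / a₁) ^ 2 - 1 / √(X / a₀) ^ 2)) := by
  rw [Real.sq_sqrt (div_nonneg hX ha₁), Real.sq_sqrt (div_nonneg hX ha₀), one_div,
    ← Real.sqrt_inv, hrec]
  congr 1
  simp only [one_div_div, inv_div]
  ring

/-- **Policy propagation formula (Lemma 1).**
Under the Monkey Bloom-filter allocation, with `X = T·E·(I_r+I_w)·(1−γ) + T·B·c_w·(1−γ)`,
`Y = B·f₁·I_r·γ`, `Z = B·c_r·γ`, and optimal policy `K*_i = √(X / (Y·T^{i−1} + Z))`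
for each level `i ≥ 1`, the propagation formula
`1/K*_{i+1} = √(1/(K*_i)² + T·(1/(K*_i)² − 1/(K*_{i−1})²))` holds for all `i ≥ 2`. -/
theorem policy_propagation
    (T γ E B f₁ Ir Iw cr cw X Y Z : ℝ)
    (hT : 0 < T) (hγ0 : 0 < γ) (hγ1 : γ < 1)
    (hE : 0 < E) (hB : 0 < B) (hf : 0 < f₁) (hIr : 0 < Ir) (hIw : 0 < Iw)
    (hcr : 0 < cr) (hcw : 0 < cw)
    (hX : X = T * E * (Ir + Iw) * (1 - γ) + T * B * cw * (1 - γ))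
    (hY : Y = B * f₁ * Ir * γ)
    (hZ : Z = B * cr * γ)
    (K : ℕ → ℝ)
    (hK : ∀ i : ℕ, 1 ≤ i → K i = Real.sqrt (X / (Y * T ^ (i - 1) + Z)))
    (i : ℕ) (hi : 2 ≤ i) :
    1 / K (i + 1) =
      Real.sqrt (1 / (K i) ^ 2 + T * (1 / (K i) ^ 2 - 1 / (K (i - 1)) ^ 2)) := by
  obtain ⟨j, rfl⟩ : ∃ j, i = j + 2 := ⟨i - 2, by omega⟩
  have hγ : 0 < 1 - γ := by linarith
  have hX0 : 0 ≤ X := by rw [hX]; positivity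
  have ha : ∀ k : ℕ, 0 ≤ Y * T ^ k + Z := fun k => by rw [hY, hZ]; positivity
  rw [hK (j + 2 + 1) (by omega), hK (j + 2) (by omega), hK (j + 2 - 1) (by omega)]
  simp only [Nat.add_sub_cancel, show j + 2 - 1 - 1 = j by omega]
  exact one_div_sqrt_div_propagation hX0 (ha j) (ha (j + 1)) (mul_pow_add_recurrence Y Z T j)
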